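/- For K ≥ 1 and all x, y ∈ ℝⁿ with |x| ≥ 1 and |y| ≥ 1, one has |x/|x|^(1+1/K) - y/|y|^(1+1/K)| ≤ 2^(1-1/K)·|x-y|^(1/K)/(|x|·|y|)^(1/K). -/

import Mathlib

/-!
With `p = 1/K`, the inversion `u = x / ‖x‖²` turns `x / ‖x‖^(1+p)` into `‖u‖^(p-1) • u`, and
`‖u - v‖ = ‖x - y‖ / (‖x‖ ‖y‖)`; so it suffices that `u ↦ ‖u‖^(p-1) • u` is `p`-Hölder with
constant `2^(1-p)`. Writing `u = a • e`, `v = b • f` with unit vectors `e, f` and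
`t = (1 - ⟪e, f⟫) / 2 ∈ [0, 1]`, one has `‖α • e - β • f‖² = t (α + β)² + (1 - t) (α - β)²`, both
for `(α, β) = (a^p, b^p)` and for `(a, b)`. Then `a^p + b^p ≤ 2^(1-p) (a + b)^p`,
`|a^p - b^p| ≤ |a - b|^p` and the concavity of `s ↦ s^p` compare the two convex combinations.
-/

open Real RealInnerProductSpace

section Scalar

variable {p : ℝ}

lemma rpow_add_rpow_le_two_rpow_mul_rpow_add (hp0 : 0 ≤ p) (hp1 : p ≤ 1) {a b : ℝ}
    (ha : 0 ≤ a) (hb : 0 ≤ b) : a ^ p + b ^ p ≤ 2 ^ (1 - p) * (a + b) ^ p := by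
  have hmid := (concaveOn_rpow hp0 hp1).2 ha hb (by norm_num : (0 : ℝ) ≤ 1 / 2)
    (by norm_num : (0 : ℝ) ≤ 1 / 2) (by norm_num)
  simp only [smul_eq_mul] at hmid
  calc a ^ p + b ^ p = 2 * (1 / 2 * a ^ p + 1 / 2 * b ^ p) := by ring
    _ ≤ 2 * (1 / 2 * a + 1 / 2 * b) ^ p := by gcongr
    _ = 2 ^ (1 - p) * (a + b) ^ p := by
      rw [show 1 / 2 * a + 1 / 2 * b = 2⁻¹ * (a + b) by ring,
        mul_rpow (by norm_num) (by positivity), inv_rpow (by norm_num),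
        rpow_sub two_pos, rpow_one]
      ring

lemma abs_rpow_sub_rpow_le_abs_sub_rpow (hp0 : 0 ≤ p) (hp1 : p ≤ 1) {a b : ℝ}
    (ha : 0 ≤ a) (hb : 0 ≤ b) : |a ^ p - b ^ p| ≤ |a - b| ^ p := by
  wlog hba : b ≤ a generalizing a b
  · rw [abs_sub_comm, abs_sub_comm a]
    exact this hb ha (le_of_not_ge hba)
  have hsub := rpow_add_le_add_rpow (sub_nonneg.2 hba) hb hp0 hp1
  rw [sub_add_cancel] at hsub
  rw [abs_of_nonneg (sub_nonneg.2 (rpow_le_rpow hb hba hp0)), abs_of_nonneg (sub_nonneg.2 hba)]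
  linarith

lemma convex_comb_sq_rpow_le (hp0 : 0 ≤ p) (hp1 : p ≤ 1) {t a b : ℝ} (ht0 : 0 ≤ t)
    (ht1 : t ≤ 1) (ha : 0 ≤ a) (hb : 0 ≤ b) :
    t * (a ^ p + b ^ p) ^ 2 + (1 - t) * (a ^ p - b ^ p) ^ 2 ≤
      (2 ^ (1 - p)) ^ 2 * (t * (a + b) ^ 2 + (1 - t) * (a - b) ^ 2) ^ p := by
  have hC : 1 ≤ (2 : ℝ) ^ (1 - p) := one_le_rpow one_le_two (by linarith)
  have hsum : (a ^ p + b ^ p) ^ 2 ≤ (2 ^ (1 - p)) ^ 2 * ((a + b) ^ 2) ^ p := by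
    rw [← rpow_pow_comm (by positivity), ← mul_pow]
    gcongr
    exact rpow_add_rpow_le_two_rpow_mul_rpow_add hp0 hp1 ha hb
  have hdiff : (a ^ p - b ^ p) ^ 2 ≤ (2 ^ (1 - p)) ^ 2 * ((a - b) ^ 2) ^ p := by
    rw [← sq_abs, ← sq_abs (a - b), ← rpow_pow_comm (abs_nonneg _), ← mul_pow]
    gcongr
    calc |a ^ p - b ^ p| ≤ |a - b| ^ p := abs_rpow_sub_rpow_le_abs_sub_rpow hp0 hp1 ha hb
      _ ≤ 2 ^ (1 - p) * |a - b| ^ p := le_mul_of_one_le_left (by positivity) hC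
  have hconc := (concaveOn_rpow hp0 hp1).2 (sq_nonneg (a + b)) (sq_nonneg (a - b)) ht0
    (sub_nonneg.2 ht1) (add_sub_cancel t 1)
  simp only [smul_eq_mul] at hconc
  calc t * (a ^ p + b ^ p) ^ 2 + (1 - t) * (a ^ p - b ^ p) ^ 2
      ≤ t * ((2 ^ (1 - p)) ^ 2 * ((a + b) ^ 2) ^ p)
        + (1 - t) * ((2 ^ (1 - p)) ^ 2 * ((a - b) ^ 2) ^ p) := by
        gcongr
    _ = (2 ^ (1 - p)) ^ 2 * (t * ((a + b) ^ 2) ^ p + (1 - t) * ((a - b) ^ 2) ^ p) := by ring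
    _ ≤ (2 ^ (1 - p)) ^ 2 * (t * (a + b) ^ 2 + (1 - t) * (a - b) ^ 2) ^ p := by gcongr

end Scalar

section InnerProductSpace

variable {E : Type*} [NormedAddCommGroup E] [InnerProductSpace ℝ E] {p : ℝ}

lemma norm_smul_sub_smul_sq_of_norm_eq_one {e f : E} (he : ‖e‖ = 1) (hf : ‖f‖ = 1) (a b : ℝ) :
    ‖a • e - b • f‖ ^ 2 =
      (1 - ⟪e, f⟫) / 2 * (a + b) ^ 2 + (1 + ⟪e, f⟫) / 2 * (a - b) ^ 2 := by
  rw [norm_sub_sq_real, norm_smul, norm_smul, inner_smul_left, inner_smul_right, he, hf]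
  simp only [Real.norm_eq_abs, conj_trivial, mul_one, sq_abs]
  ring

lemma norm_rpow_smul_sub_rpow_smul_le (hp0 : 0 ≤ p) (hp1 : p ≤ 1) {e f : E} (he : ‖e‖ = 1)
    (hf : ‖f‖ = 1) {a b : ℝ} (ha : 0 ≤ a) (hb : 0 ≤ b) :
    ‖a ^ p • e - b ^ p • f‖ ≤ 2 ^ (1 - p) * ‖a • e - b • f‖ ^ p := by
  have hinner := abs_le.1 ((abs_real_inner_le_norm e f).trans_eq (by rw [he, hf, one_mul]))
  refine le_of_pow_le_pow_left₀ two_ne_zero (by positivity) ?_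
  rw [mul_pow, rpow_pow_comm (norm_nonneg _), norm_smul_sub_smul_sq_of_norm_eq_one he hf,
    norm_smul_sub_smul_sq_of_norm_eq_one he hf,
    show (1 + ⟪e, f⟫) / 2 = 1 - (1 - ⟪e, f⟫) / 2 by ring]
  exact convex_comb_sq_rpow_le hp0 hp1 (by linarith) (by linarith) ha hb

lemma norm_rpow_sub_one_smul_eq (p : ℝ) {u : E} (hu : u ≠ 0) :
    ‖u‖ ^ (p - 1) • u = ‖u‖ ^ p • (‖u‖⁻¹ • u) := by
  rw [smul_smul, rpow_sub_one (norm_ne_zero_iff.2 hu), div_eq_mul_inv]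

lemma norm_norm_rpow_sub_one_smul_sub_le (hp0 : 0 ≤ p) (hp1 : p ≤ 1) {u v : E} (hu : u ≠ 0)
    (hv : v ≠ 0) :
    ‖‖u‖ ^ (p - 1) • u - ‖v‖ ^ (p - 1) • v‖ ≤ 2 ^ (1 - p) * ‖u - v‖ ^ p := by
  have hunit : ∀ {w : E}, w ≠ 0 → ‖‖w‖⁻¹ • w‖ = 1 := fun hw => norm_smul_inv_norm hw
  have key := norm_rpow_smul_sub_rpow_smul_le hp0 hp1 (hunit hu) (hunit hv) (norm_nonneg u)
    (norm_nonneg v)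
  rwa [smul_inv_smul₀ (norm_ne_zero_iff.2 hu), smul_inv_smul₀ (norm_ne_zero_iff.2 hv),
    ← norm_rpow_sub_one_smul_eq p hu, ← norm_rpow_sub_one_smul_eq p hv] at key

lemma norm_inv_norm_sq_smul (x : E) : ‖(1 / ‖x‖) ^ 2 • x‖ = ‖x‖⁻¹ := by
  rcases eq_or_ne x 0 with rfl | hx
  · simp
  rw [norm_smul, norm_pow, norm_div, norm_one, norm_norm]
  field_simp [norm_ne_zero_iff.2 hx]

lemma inv_norm_rpow_smul_eq (p : ℝ) {x : E} (hx : x ≠ 0) :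
    (‖x‖ ^ (1 + p))⁻¹ • x = ‖(1 / ‖x‖) ^ 2 • x‖ ^ (p - 1) • ((1 / ‖x‖) ^ 2 • x) := by
  have hr := norm_pos_iff.2 hx
  rw [smul_smul, norm_inv_norm_sq_smul, ← inv_rpow hr.le, one_div, ← rpow_two,
    ← rpow_add (inv_pos.2 hr)]
  congr 2
  ring

end InnerProductSpace

theorem stmt_18 (n : ℕ) (K : ℝ) (hK : 1 ≤ K)
    (x y : EuclideanSpace ℝ (Fin n)) (hx : 1 ≤ ‖x‖) (hy : 1 ≤ ‖y‖) :
    ‖(‖x‖ ^ (1 + 1 / K))⁻¹ • x - (‖y‖ ^ (1 + 1 / K))⁻¹ • y‖ ≤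
      2 ^ (1 - 1 / K) * ‖x - y‖ ^ (1 / K) / (‖x‖ * ‖y‖) ^ (1 / K) := by
  have hx0 : x ≠ 0 := norm_pos_iff.1 (one_pos.trans_le hx)
  have hy0 : y ≠ 0 := norm_pos_iff.1 (one_pos.trans_le hy)
  have hinv_ne_zero : ∀ {z : EuclideanSpace ℝ (Fin n)}, z ≠ 0 → (1 / ‖z‖) ^ 2 • z ≠ 0 :=
    fun hz => by rw [← norm_ne_zero_iff, norm_inv_norm_sq_smul]; simpa using hz
  calc ‖(‖x‖ ^ (1 + 1 / K))⁻¹ • x - (‖y‖ ^ (1 + 1 / K))⁻¹ • y‖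
      = ‖‖(1 / ‖x‖) ^ 2 • x‖ ^ (1 / K - 1) • ((1 / ‖x‖) ^ 2 • x)
          - ‖(1 / ‖y‖) ^ 2 • y‖ ^ (1 / K - 1) • ((1 / ‖y‖) ^ 2 • y)‖ := by
        rw [inv_norm_rpow_smul_eq _ hx0, inv_norm_rpow_smul_eq _ hy0]
    _ ≤ 2 ^ (1 - 1 / K) * ‖(1 / ‖x‖) ^ 2 • x - (1 / ‖y‖) ^ 2 • y‖ ^ (1 / K) :=
        norm_norm_rpow_sub_one_smul_sub_le (by positivity) (div_le_one_of_le₀ hK (by positivity))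
          (hinv_ne_zero hx0) (hinv_ne_zero hy0)
    _ = 2 ^ (1 - 1 / K) * ‖x - y‖ ^ (1 / K) / (‖x‖ * ‖y‖) ^ (1 / K) := by
        rw [← dist_eq_norm, dist_div_norm_sq_smul hx0 hy0, dist_eq_norm, one_pow,
          div_mul_eq_mul_div, one_mul, div_rpow (norm_nonneg _) (by positivity), mul_div_assoc]
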